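/- Let V be a real vector space, let Φ₁, Φ₀, Φ₋₁, Φ₋₂ ∈ V, let τ > 0, τ' > 0, and set Φ̂ := Φ₁ + γ₃·(Φ₁ − Φ₀) − γ₂·(Φ₀ − Φ₋₁) + γ₁·(Φ₋₁ − Φ₋₂). Then ((1+2τ)/(1+τ))·Φ̂ − (1+τ)·Φ₀ + (τ²/(1+τ))·Φ₋₁ = β₃·(Φ₁ − Φ₀) − β₂·(Φ₀ − Φ₋₁) + β₁·(Φ₋₁ − Φ₋₂); that is, the variable-step BDF2 difference operator applied to the pre-filter value Φ̂ equals the third-order β-form difference operator 𝒜(Φ₁) applied to the filtered values. -/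

import Mathlib

/-!
The variable-step BDF2 operator is linear, has leading coefficient `c = (1 + 2τ)/(1 + τ)` and
annihilates constants, so it equals `c (Φ₁ - Φ₀) - τ²/(1 + τ) (Φ₀ - Φ₋₁)`. The time filter only
adds a combination of differences to `Φ₁`, which the operator multiplies by `c`; and the β's are
exactly `c (1 + γ₃)`, `τ²/(1 + τ) + c γ₂` and `c γ₁`.
-/

/-- BDF2-TF β-coefficients. -/
noncomputable def beta3 (τ τ' : ℝ) : ℝ :=
  1 + τ / (1 + τ) + τ * τ' / (1 + τ' * (1 + τ))
noncomputable def beta2 (τ τ' : ℝ) : ℝ :=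
  τ ^ 2 / (1 + τ) + τ ^ 2 * τ' * (1 + τ' * (2 + τ)) / ((1 + τ') * (1 + τ' * (1 + τ)))
noncomputable def beta1 (τ τ' : ℝ) : ℝ :=
  τ ^ 2 * τ' ^ 3 * (1 + τ) / ((1 + τ') * (1 + τ' * (1 + τ)))

/-- BDF2-TF γ-coefficients. -/
noncomputable def gamma3 (τ τ' : ℝ) : ℝ :=
  τ * τ' * (1 + τ) / ((1 + 2 * τ) * (1 + τ' * (1 + τ)))
noncomputable def gamma2 (τ τ' : ℝ) : ℝ :=
  τ ^ 2 * τ' * (1 + τ) * (1 + τ' * (2 + τ)) /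
    ((1 + 2 * τ) * (1 + τ') * (1 + τ' * (1 + τ)))
noncomputable def gamma1 (τ τ' : ℝ) : ℝ :=
  τ ^ 2 * τ' ^ 3 * (1 + τ) ^ 2 / ((1 + 2 * τ) * (1 + τ') * (1 + τ' * (1 + τ)))

noncomputable def bdf2 {V : Type*} [AddCommGroup V] [Module ℝ V] (τ : ℝ) (Φ1 Φ0 Φm1 : V) : V :=
  ((1 + 2 * τ) / (1 + τ)) • Φ1 - (1 + τ) • Φ0 + (τ ^ 2 / (1 + τ)) • Φm1

section BDF2

variable {V : Type*} [AddCommGroup V] [Module ℝ V]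

theorem bdf2_eq_sub_sub {τ : ℝ} (hτ : 1 + τ ≠ 0) (Φ1 Φ0 Φm1 : V) :
    bdf2 τ Φ1 Φ0 Φm1
      = ((1 + 2 * τ) / (1 + τ)) • (Φ1 - Φ0) - (τ ^ 2 / (1 + τ)) • (Φ0 - Φm1) := by
  have hc : ((1 + 2 * τ) / (1 + τ) + τ ^ 2 / (1 + τ)) • Φ0 = (1 + τ) • Φ0 := by
    congr 1
    field_simp
    ring
  rw [bdf2, ← hc]
  module

theorem bdf2_add_left (τ : ℝ) (Φ1 v Φ0 Φm1 : V) :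
    bdf2 τ (Φ1 + v) Φ0 Φm1 = bdf2 τ Φ1 Φ0 Φm1 + ((1 + 2 * τ) / (1 + τ)) • v := by
  rw [bdf2, bdf2]
  module

end BDF2

section Coefficients

variable {τ : ℝ} (τ' : ℝ)

theorem mul_one_add_gamma3_eq_beta3 (h1 : 1 + τ ≠ 0) (h2 : 1 + 2 * τ ≠ 0) :
    (1 + 2 * τ) / (1 + τ) * (1 + gamma3 τ τ') = beta3 τ τ' := by
  rw [beta3, gamma3]
  field_simp
  ring

theorem add_mul_gamma2_eq_beta2 (h1 : 1 + τ ≠ 0) (h2 : 1 + 2 * τ ≠ 0) :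
    τ ^ 2 / (1 + τ) + (1 + 2 * τ) / (1 + τ) * gamma2 τ τ' = beta2 τ τ' := by
  rw [beta2, gamma2]
  congr 1
  field_simp

theorem mul_gamma1_eq_beta1 (h1 : 1 + τ ≠ 0) (h2 : 1 + 2 * τ ≠ 0) :
    (1 + 2 * τ) / (1 + τ) * gamma1 τ τ' = beta1 τ τ' := by
  rw [beta1, gamma1]
  field_simp

end Coefficients

theorem bdf2tf_bdf2_of_hat_eq_beta_form_general {V : Type*} [AddCommGroup V] [Module ℝ V]
    (Φ1 Φ0 Φm1 Φm2 : V) (τ τ' : ℝ) (hτ : 0 < τ)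
    (Φhat : V)
    (hΦhat : Φhat = Φ1 + gamma3 τ τ' • (Φ1 - Φ0) - gamma2 τ τ' • (Φ0 - Φm1)
      + gamma1 τ τ' • (Φm1 - Φm2)) :
    ((1 + 2 * τ) / (1 + τ)) • Φhat - (1 + τ) • Φ0 + (τ ^ 2 / (1 + τ)) • Φm1
    = beta3 τ τ' • (Φ1 - Φ0) - beta2 τ τ' • (Φ0 - Φm1)
        + beta1 τ τ' • (Φm1 - Φm2) := by
  have h1 : 1 + τ ≠ 0 := by positivity
  have h2 : 1 + 2 * τ ≠ 0 := by positivity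
  have hΦhat_split : Φhat = Φ1 + (gamma3 τ τ' • (Φ1 - Φ0) - gamma2 τ τ' • (Φ0 - Φm1)
      + gamma1 τ τ' • (Φm1 - Φm2)) := by
    rw [hΦhat]
    abel
  change bdf2 τ Φhat Φ0 Φm1 = _
  rw [hΦhat_split, bdf2_add_left, bdf2_eq_sub_sub h1, ← mul_one_add_gamma3_eq_beta3 τ' h1 h2,
    ← add_mul_gamma2_eq_beta2 τ' h1 h2, ← mul_gamma1_eq_beta1 τ' h1 h2]
  module

/-- The variable-step BDF2 difference operator applied to the pre-filter value
`Φ̂` equals the third-order β-form difference operator `𝒜(Φ₁)` applied to the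
filtered values. -/
theorem bdf2tf_bdf2_of_hat_eq_beta_form {V : Type*} [AddCommGroup V] [Module ℝ V]
    (Φ1 Φ0 Φm1 Φm2 : V) (τ τ' : ℝ) (hτ : 0 < τ) (hτ' : 0 < τ')
    (Φhat : V)
    (hΦhat : Φhat = Φ1 + gamma3 τ τ' • (Φ1 - Φ0) - gamma2 τ τ' • (Φ0 - Φm1)
      + gamma1 τ τ' • (Φm1 - Φm2)) :
    ((1 + 2 * τ) / (1 + τ)) • Φhat - (1 + τ) • Φ0 + (τ ^ 2 / (1 + τ)) • Φm1
    = beta3 τ τ' • (Φ1 - Φ0) - beta2 τ τ' • (Φ0 - Φm1)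
        + beta1 τ τ' • (Φm1 - Φm2) :=
  bdf2tf_bdf2_of_hat_eq_beta_form_general Φ1 Φ0 Φm1 Φm2 τ τ' hτ Φhat hΦhat
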